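/- arXiv:2102.06304 — 2 statements merged into one kernel-verified Lean document; each statement's English description precedes it below -/
import Mathlib

section
/- Suppose the random variable X satisfies E[X] = 0, |X| ≤ 1 almost surely and P(|X| > ε) ≤ ε for some ε ∈ (0,1). Then ‖X‖_{ψ₁} := sup_{p≥1} ‖X‖_p / p ≤ 2/(e·ln(1/ε)). -/
open MeasureTheory ProbabilityTheory

/-- The `L^p` norm of a real random variable, `(E|Z|^p)^(1/p)`. -/
noncomputable def lpNorm {Ω : Type*} [MeasurableSpace Ω] (μ : Measure Ω) (p : ℝ) (Z : Ω → ℝ) : ℝ :=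
  (∫ ω, |Z ω| ^ p ∂μ) ^ (1 / p)

/-- The Orlicz-type norm `‖Z‖_{ψ_α} = sup_{p ≥ 1} ‖Z‖_p / p^(1/α)`. -/
noncomputable def psiNorm {Ω : Type*} [MeasurableSpace Ω] (α : ℝ) (μ : Measure Ω) (Z : Ω → ℝ) : ℝ :=
  ⨆ p : {p : ℝ // 1 ≤ p}, lpNorm μ (p : ℝ) Z / (p : ℝ) ^ ((1 : ℝ) / α)

/-!
Splitting according to whether `|X| ≤ ε` gives `E|X|^p ≤ ε^p + P(|X| > ε) ≤ ε^p + ε`, so by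
Minkowski's inequality for `(a^p + b^p)^(1/p)` we get `‖X‖_p ≤ ε + ε^(1/p) ≤ 2 ε^(1/p)`.
Writing `L = log(1/ε)`, we have `ε^(1/p) / p = (1/L) · (L/p) e^(-L/p) ≤ 1/(e L)`,
since `t e^(-t) ≤ 1/e`.
-/

lemma Real.rpow_one_div_div_le {ε p : ℝ} (hε0 : 0 < ε) (hε1 : ε < 1) (hp : 0 < p) :
    ε ^ (1 / p) / p ≤ 1 / (Real.exp 1 * Real.log (1 / ε)) := by
  set L := Real.log (1 / ε)
  have hL : 0 < L := Real.log_pos (by rw [lt_div_iff₀ hε0]; linarith)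
  have hlog : Real.log ε = -L := by simp [L, Real.log_inv]
  have hrpow : ε ^ (1 / p) = Real.exp (-(L / p)) := by
    rw [Real.rpow_def_of_pos hε0, hlog]; ring_nf
  have hexp : Real.exp 1 * (L / p) ≤ Real.exp (L / p) := Real.exp_one_mul_le_exp
  rw [div_le_div_iff₀ hp (by positivity), hrpow, one_mul]
  calc Real.exp (-(L / p)) * (Real.exp 1 * L)
      = Real.exp (-(L / p)) * (Real.exp 1 * (L / p)) * p := by field_simp
    _ ≤ Real.exp (-(L / p)) * Real.exp (L / p) * p := by gcongr
    _ = p := by rw [← Real.exp_add, neg_add_cancel, Real.exp_zero, one_mul]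

section BoundedRandomVariable

variable {Ω : Type*} [MeasurableSpace Ω] {μ : Measure Ω} [IsProbabilityMeasure μ]
  {X : Ω → ℝ} {ε p : ℝ}

lemma integral_rpow_abs_le_of_abs_le_one (hmeas : Measurable X) (hbdd : ∀ᵐ ω ∂μ, |X ω| ≤ 1)
    (hε : 0 ≤ ε) (hp : 0 < p) :
    ∫ ω, |X ω| ^ p ∂μ ≤ ε ^ p + μ.real {ω | ε < |X ω|} := by
  set A := {ω | ε < |X ω|}
  have hA : MeasurableSet A := measurableSet_lt measurable_const hmeas.abs
  have hpointwise : ∀ᵐ ω ∂μ, |X ω| ^ p ≤ ε ^ p + A.indicator 1 ω := by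
    filter_upwards [hbdd] with ω hω
    by_cases hωA : ω ∈ A
    · rw [Set.indicator_of_mem hωA, Pi.one_apply]
      have := Real.rpow_le_one (abs_nonneg (X ω)) hω hp.le
      have := Real.rpow_nonneg hε p
      linarith
    · rw [Set.indicator_of_notMem hωA, add_zero]
      exact Real.rpow_le_rpow (abs_nonneg _) (not_lt.mp hωA) hp.le
  have hint : Integrable (fun ω => |X ω| ^ p) μ := by
    refine Integrable.mono' (integrable_const 1) (hmeas.abs.pow_const p).aestronglyMeasurable ?_
    filter_upwards [hbdd] with ω hω
    rw [Real.norm_eq_abs, abs_of_nonneg (by positivity)]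
    exact Real.rpow_le_one (abs_nonneg _) hω hp.le
  have hintA : Integrable (A.indicator (1 : Ω → ℝ)) μ := (integrable_const 1).indicator hA
  calc ∫ ω, |X ω| ^ p ∂μ ≤ ∫ ω, (ε ^ p + A.indicator 1 ω) ∂μ :=
        integral_mono_ae hint ((integrable_const _).add hintA) hpointwise
    _ = ε ^ p + μ.real A := by
        rw [integral_add (integrable_const _) hintA, integral_const, Pi.one_def,
          integral_indicator_const _ hA]
        simp

lemma lpNorm_le_two_mul_rpow_of_tail_le (hmeas : Measurable X) (hbdd : ∀ᵐ ω ∂μ, |X ω| ≤ 1)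
    (hε0 : 0 ≤ ε) (hε1 : ε ≤ 1) (htail : μ.real {ω | ε < |X ω|} ≤ ε) (hp : 1 ≤ p) :
    lpNorm μ p X ≤ 2 * ε ^ (1 / p) := by
  have hp0 : 0 < p := one_pos.trans_le hp
  have hmoment : ∫ ω, |X ω| ^ p ∂μ ≤ ε ^ p + (ε ^ (1 / p)) ^ p := by
    rw [← Real.rpow_mul hε0, one_div, inv_mul_cancel₀ hp0.ne', Real.rpow_one]
    linarith [integral_rpow_abs_le_of_abs_le_one hmeas hbdd hε0 hp0]
  have hε_le : ε ≤ ε ^ (1 / p) := by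
    simpa using Real.rpow_le_rpow_of_exponent_ge' hε0 hε1 (by positivity)
      (one_div_le_one_div_of_le one_pos hp : 1 / p ≤ 1 / 1)
  calc lpNorm μ p X ≤ (ε ^ p + (ε ^ (1 / p)) ^ p) ^ (1 / p) :=
        Real.rpow_le_rpow (integral_nonneg fun ω => by positivity) hmoment (by positivity)
    _ ≤ ε + ε ^ (1 / p) := Real.rpow_add_rpow_le_add hε0 (by positivity) hp
    _ ≤ 2 * ε ^ (1 / p) := by linarith

end BoundedRandomVariable

theorem stmt_5_general {Ω : Type*} [MeasurableSpace Ω] (μ : Measure Ω) [IsProbabilityMeasure μ]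
    (X : Ω → ℝ) (hmeas : Measurable X)
    (hbdd : ∀ᵐ ω ∂μ, |X ω| ≤ 1)
    (ε : ℝ) (hε : ε ∈ Set.Ioo (0 : ℝ) 1)
    (htail : (μ {ω | ε < |X ω|}).toReal ≤ ε) :
    psiNorm 1 μ X ≤ 2 / (Real.exp 1 * Real.log (1 / ε)) := by
  obtain ⟨hε0, hε1⟩ := hε
  refine ciSup_le fun ⟨p, hp⟩ => ?_
  have hp0 : 0 < p := one_pos.trans_le hp
  calc lpNorm μ p X / p ^ ((1 : ℝ) / 1) ≤ 2 * ε ^ (1 / p) / p := by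
        rw [div_one, Real.rpow_one]
        gcongr
        exact lpNorm_le_two_mul_rpow_of_tail_le hmeas hbdd hε0.le hε1.le htail hp
    _ = 2 * (ε ^ (1 / p) / p) := mul_div_assoc _ _ _
    _ ≤ 2 * (1 / (Real.exp 1 * Real.log (1 / ε))) :=
        mul_le_mul_of_nonneg_left (Real.rpow_one_div_div_le hε0 hε1 hp0) zero_le_two
    _ = 2 / (Real.exp 1 * Real.log (1 / ε)) := by ring

theorem stmt_5 {Ω : Type*} [MeasurableSpace Ω] (μ : Measure Ω) [IsProbabilityMeasure μ]
    (X : Ω → ℝ) (hmeas : Measurable X) (hint : Integrable X μ)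
    (hcentered : ∫ ω, X ω ∂μ = 0)
    (hbdd : ∀ᵐ ω ∂μ, |X ω| ≤ 1)
    (ε : ℝ) (hε : ε ∈ Set.Ioo (0 : ℝ) 1)
    (htail : (μ {ω | ε < |X ω|}).toReal ≤ ε) :
    psiNorm 1 μ X ≤ 2 / (Real.exp 1 * Real.log (1 / ε)) :=
  stmt_5_general μ X hmeas hbdd ε hε htail
end

section
/- Let C and b be positive reals and t > 0. Then inf_{β ∈ [0, 1/b)} ( −βt + Cβ²/(1 − bβ) ) ≤ −t² / (2(2C + bt)). -/
/-! The bound is the value of the objective at `β = t / (2C + bt)`, where `1 - bβ = 2C / (2C + bt)`;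
the infimum is a genuine one because the objective is at least `-t / b` on `[0, 1/b)`. -/

lemma neg_div_le_neg_mul_add_div_of_mem_Ico {C b t β : ℝ} (hC : 0 ≤ C) (hb : 0 < b)
    (ht : 0 ≤ t) (hβ : β ∈ Set.Ico 0 (1 / b)) :
    -t / b ≤ -β * t + C * β ^ 2 / (1 - b * β) := by
  have hbβ : b * β < 1 := by
    have := (lt_div_iff₀ hb).mp hβ.2
    linarith [mul_comm b β]
  have hquot : 0 ≤ C * β ^ 2 / (1 - b * β) := div_nonneg (by positivity) (by linarith)
  have hβt : β * t ≤ t / b := by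
    rw [le_div_iff₀ hb]
    nlinarith
  rw [neg_div]
  linarith

lemma neg_mul_add_div_at_optimum {C b t : ℝ} (hC : C ≠ 0) (hD : 2 * C + b * t ≠ 0) :
    -(t / (2 * C + b * t)) * t + C * (t / (2 * C + b * t)) ^ 2 / (1 - b * (t / (2 * C + b * t)))
      = -t ^ 2 / (2 * (2 * C + b * t)) := by
  have hgap : 1 - b * (t / (2 * C + b * t)) = 2 * C / (2 * C + b * t) := by
    field_simp
    ring
  simp only [hgap]
  field_simp
  ring

theorem stmt_11 (C b t : ℝ) (hC : 0 < C) (hb : 0 < b) (ht : 0 < t) :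
    sInf ((fun β : ℝ => -β * t + C * β ^ 2 / (1 - b * β)) '' Set.Ico 0 (1 / b)) ≤
      -t ^ 2 / (2 * (2 * C + b * t)) := by
  have hD : 0 < 2 * C + b * t := by positivity
  have hopt : t / (2 * C + b * t) ∈ Set.Ico 0 (1 / b) := by
    refine ⟨by positivity, ?_⟩
    rw [div_lt_div_iff₀ hD hb]
    nlinarith
  refine csInf_le ⟨-t / b, ?_⟩ ⟨_, hopt, neg_mul_add_div_at_optimum hC.ne' hD.ne'⟩
  rintro _ ⟨β, hβ, rfl⟩
  exact neg_div_le_neg_mul_add_div_of_mem_Ico hC.le hb ht.le hβ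
end
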